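/- List matching lemma, conditional form: under Gumbel-max list sampling, for every j ∈ {1,…,N}, Pr[Y ∈ {X^(1), …, X^(K)} | Y = j] ≥ ( 1 + q_j/(K·p_j) )^{−1}. (Theorem 1, equation (4).) -/

import Mathlib

/-!
Competing exponentials: if the `S m` are i.i.d. `Exp(1)` and `w > 0`, then `S m / w m` are
independent `Exp(w m)` variables, and the coordinate `m₀` attains the minimum of `S m / w m` with
probability `w m₀ / ∑ w`.

Fix `j`. With rates `w (i, k) = q i`, the event `Y = j` is covered by the `K` events "`(j, k₀)`
wins", each of probability `q j / K`, so `Pr[Y = j] ≤ q j`. Raising the rates of the column `k₀`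
to `max (q i) (q j / p j * p i)` shrinks the event "`(j, k₀)` wins" to one on which also
`X k₀ = j`; these events are disjoint in `k₀`, and since the rates sum to at most
`K + q j / p j`, each has probability at least `q j / (K + q j / p j)`. Hence
`Pr[Y = j, Y ∈ {X k}] ≥ K q j / (K + q j / p j) = (1 + q j / (K p j))⁻¹ q j`.
-/

open MeasureTheory ProbabilityTheory Set

theorem MeasureTheory.Measure.pi_setOf_forall_ne_mem {ι β : Type*} [Fintype ι] [DecidableEq ι]
    [MeasurableSpace β] (μ : ι → Measure β) [∀ i, SigmaFinite (μ i)] (i₀ : ι)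
    (I : ι → β → Set β) (hI : MeasurableSet {x : ι → β | ∀ i ≠ i₀, x i ∈ I i (x i₀)}) :
    Measure.pi μ {x | ∀ i ≠ i₀, x i ∈ I i (x i₀)}
      = ∫⁻ t, ∏ i ∈ Finset.univ.erase i₀, μ i (I i t) ∂μ i₀ := by
  let _ : Unique {i // i = i₀} := ⟨⟨⟨i₀, rfl⟩⟩, fun i => Subtype.ext i.2⟩
  set e := MeasurableEquiv.piEquivPiSubtypeProd (fun _ : ι => β) (· = i₀)
  set B : Set (({i // i = i₀} → β) × ({i // i ≠ i₀} → β)) :=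
    {z | ∀ i : {i // i ≠ i₀}, z.2 i ∈ I i (z.1 default)}
  have hpre : {x : ι → β | ∀ i ≠ i₀, x i ∈ I i (x i₀)} = e ⁻¹' B :=
    Set.ext fun x => ⟨fun h i => h i i.2, fun h i hi => h ⟨i, hi⟩⟩
  have hB : MeasurableSet B := e.measurableSet_preimage.1 (hpre ▸ hI)
  have hslice : ∀ a, Prod.mk a ⁻¹' B = univ.pi fun i : {i // i ≠ i₀} => I i (a default) := by
    intro a; ext y; simp [B]
  rw [hpre, (measurePreserving_piEquivPiSubtypeProd μ _).measure_preimage hB.nullMeasurableSet,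
    Measure.prod_apply hB]
  simp_rw [hslice, Measure.pi_pi]
  refine Eq.trans ?_ <| (measurePreserving_piUnique fun i : {i // i = i₀} => μ i).lintegral_comp_emb
    (MeasurableEquiv.piUnique _).measurableEmbedding fun t => ∏ i ∈ Finset.univ.erase i₀, μ i (I i t)
  congr 2
  · exact Subsingleton.elim _ _
  funext a
  exact (Finset.prod_subtype _ (fun i => by simp) (fun i => μ i (I i (a default)))).symm

namespace ProbabilityTheory

instance (r : ℝ) : NullSingletonClass (expMeasure r) :=
  inferInstanceAs (NullSingletonClass (volume.withDensity _))

lemma expMeasure_Iic {r : ℝ} (hr : 0 < r) (t : ℝ) :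
    expMeasure r (Iic t) = ENNReal.ofReal (if 0 ≤ t then 1 - Real.exp (-(r * t)) else 0) := by
  have := isProbabilityMeasure_expMeasure hr
  rw [← ofReal_cdf, cdf_expMeasure_eq hr]

lemma expMeasure_Ioi {r t : ℝ} (hr : 0 < r) (ht : 0 ≤ t) :
    expMeasure r (Ioi t) = ENNReal.ofReal (Real.exp (-(r * t))) := by
  have := isProbabilityMeasure_expMeasure hr
  have hle : Real.exp (-(r * t)) ≤ 1 := Real.exp_le_one_iff.2 (by nlinarith)
  rw [← compl_Iic, prob_compl_eq_one_sub measurableSet_Iic, expMeasure_Iic hr, if_pos ht,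
    ← ENNReal.ofReal_one, ← ENNReal.ofReal_sub _ (by linarith [Real.exp_pos (-(r * t))])]
  congr 1
  ring

lemma expMeasure_Ici {r t : ℝ} (hr : 0 < r) (ht : 0 ≤ t) :
    expMeasure r (Ici t) = ENNReal.ofReal (Real.exp (-(r * t))) := by
  rw [← measure_congr Ioi_ae_eq_Ici, expMeasure_Ioi hr ht]

lemma ae_nonneg_expMeasure {r : ℝ} (hr : 0 < r) : ∀ᵐ t ∂expMeasure r, 0 ≤ t := by
  refine measure_mono_null (fun t (ht : ¬ 0 ≤ t) => ?_) ((expMeasure_Iic hr 0).trans (by simp))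
  exact (not_le.1 ht).le

lemma expMeasure_map_div {r c : ℝ} (hr : 0 < r) (hc : 0 < c) :
    (expMeasure r).map (· / c) = expMeasure (r * c) := by
  have := isProbabilityMeasure_expMeasure hr
  have := isProbabilityMeasure_expMeasure (mul_pos hr hc)
  refine Measure.ext_of_Iic _ _ fun t => ?_
  have hpre : (· / c) ⁻¹' Iic t = Iic (t * c) := by ext x; simp [div_le_iff₀ hc]
  rw [Measure.map_apply (by fun_prop) measurableSet_Iic, hpre, expMeasure_Iic hr,
    expMeasure_Iic (mul_pos hr hc)]
  simp only [mul_nonneg_iff_of_pos_right hc]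
  ring_nf

lemma lintegral_exp_neg_mul_expMeasure {r a : ℝ} (hr : 0 < r) (ha : 0 ≤ a) :
    ∫⁻ t, ENNReal.ofReal (Real.exp (-(a * t))) ∂expMeasure r = ENNReal.ofReal (r / (r + a)) := by
  have hra : 0 < r + a := by linarith
  have hpdf : ∀ t, exponentialPDF r t * ENNReal.ofReal (Real.exp (-(a * t)))
      = ENNReal.ofReal (r / (r + a)) * exponentialPDF (r + a) t := by
    intro t
    rcases lt_or_ge t 0 with ht | ht
    · simp [exponentialPDF_of_neg ht]
    · rw [exponentialPDF_of_nonneg ht, exponentialPDF_of_nonneg ht,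
        ← ENNReal.ofReal_mul (by positivity), ← ENNReal.ofReal_mul (by positivity)]
      congr 1
      rw [mul_assoc, ← Real.exp_add]
      field_simp
      ring_nf
  have hmeas : ∀ s, Measurable (exponentialPDF s) := fun s =>
    (measurable_exponentialPDFReal s).ennreal_ofReal
  rw [show expMeasure r = volume.withDensity (exponentialPDF r) from rfl,
    lintegral_withDensity_eq_lintegral_mul _ (hmeas r) (by fun_prop)]
  simp_rw [Pi.mul_apply, hpdf]
  rw [lintegral_const_mul _ (hmeas _), lintegral_exponentialPDF_eq_one hra, mul_one]

variable {Ω ι : Type*} [MeasurableSpace Ω] {μ : Measure Ω} [Fintype ι] [DecidableEq ι]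
  {T : ι → Ω → ℝ}

/-- `I = Ioi` and `I = Ici` give the strict and the weak win of `i₀` in the race. -/
theorem measure_forall_ne_div_mem (hT : ∀ i, Measurable (T i)) (hind : iIndepFun T μ)
    (hlaw : ∀ i, μ.map (T i) = expMeasure 1) {w : ι → ℝ} (hw : ∀ i, 0 < w i)
    (I : ℝ → Set ℝ) (hI : MeasurableSet {z : ℝ × ℝ | z.2 ∈ I z.1})
    (hItail : ∀ r t, 0 < r → 0 ≤ t → expMeasure r (I t) = ENNReal.ofReal (Real.exp (-(r * t))))
    (i₀ : ι) :
    μ {ω | ∀ i ≠ i₀, T i ω / w i ∈ I (T i₀ ω / w i₀)} = ENNReal.ofReal (w i₀ / ∑ i, w i) := by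
  have hU : ∀ i, Measurable fun ω => T i ω / w i := fun i => (hT i).div_const _
  have hUlaw : μ.map (fun ω i => T i ω / w i) = Measure.pi fun i => expMeasure (w i) := by
    rw [(hind.comp (fun i x => x / w i) fun i => measurable_id.div_const _).map_fun_eq_pi_map
      fun i => (hU i).aemeasurable]
    congr with i : 1
    change μ.map ((· / w i) ∘ T i) = _
    rw [← Measure.map_map (by fun_prop) (hT i), hlaw, expMeasure_map_div one_pos (hw i), one_mul]
  have hE : MeasurableSet {x : ι → ℝ | ∀ i ≠ i₀, x i ∈ I (x i₀)} := by
    refine measurableSet_setOfPred.2 <| Measurable.forall fun i => measurable_const.imp ?_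
    have hpair : Measurable fun x : ι → ℝ => (x i₀, x i) := by fun_prop
    exact measurableSet_setOfPred.1 (hI.preimage hpair)
  have := fun i => isProbabilityMeasure_expMeasure (hw i)
  rw [show {ω | ∀ i ≠ i₀, T i ω / w i ∈ I (T i₀ ω / w i₀)}
      = (fun ω i => T i ω / w i) ⁻¹' {x | ∀ i ≠ i₀, x i ∈ I (x i₀)} from rfl,
    ← Measure.map_apply (measurable_pi_lambda _ hU) hE, hUlaw,
    Measure.pi_setOf_forall_ne_mem _ i₀ (fun _ => I) hE,
    ← Finset.add_sum_erase _ _ (Finset.mem_univ i₀),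
    ← lintegral_exp_neg_mul_expMeasure (hw i₀) (Finset.sum_nonneg fun i _ => (hw i).le)]
  refine lintegral_congr_ae ((ae_nonneg_expMeasure (hw i₀)).mono fun t ht => ?_)
  dsimp only
  rw [Finset.sum_mul, ← Finset.sum_neg_distrib, Real.exp_sum,
    ENNReal.ofReal_prod_of_nonneg fun i _ => (Real.exp_pos _).le]
  exact Finset.prod_congr rfl fun i _ => hItail _ _ (hw i) ht

theorem measure_forall_ne_div_lt (hT : ∀ i, Measurable (T i)) (hind : iIndepFun T μ)
    (hlaw : ∀ i, μ.map (T i) = expMeasure 1) {w : ι → ℝ} (hw : ∀ i, 0 < w i) (i₀ : ι) :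
    μ {ω | ∀ i ≠ i₀, T i₀ ω / w i₀ < T i ω / w i} = ENNReal.ofReal (w i₀ / ∑ i, w i) :=
  measure_forall_ne_div_mem hT hind hlaw hw Ioi (measurableSet_lt measurable_fst measurable_snd)
    (fun _ _ hr ht => expMeasure_Ioi hr ht) i₀

theorem measure_forall_ne_div_le (hT : ∀ i, Measurable (T i)) (hind : iIndepFun T μ)
    (hlaw : ∀ i, μ.map (T i) = expMeasure 1) {w : ι → ℝ} (hw : ∀ i, 0 < w i) (i₀ : ι) :
    μ {ω | ∀ i ≠ i₀, T i₀ ω / w i₀ ≤ T i ω / w i} = ENNReal.ofReal (w i₀ / ∑ i, w i) :=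
  measure_forall_ne_div_mem hT hind hlaw hw Ici (measurableSet_le measurable_fst measurable_snd)
    (fun _ _ hr ht => expMeasure_Ici hr ht) i₀

lemma ae_nonneg_of_map_eq_expMeasure {Z : Ω → ℝ} (hZ : Measurable Z) {r : ℝ} (hr : 0 < r)
    (hlaw : μ.map Z = expMeasure r) : ∀ᵐ ω ∂μ, 0 ≤ Z ω :=
  ae_of_ae_map hZ.aemeasurable (hlaw ▸ ae_nonneg_expMeasure hr)

lemma le_cond_apply_of_mul_le [IsFiniteMeasure μ] {s t : Set Ω} (hs : MeasurableSet s)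
    {a b : ENNReal} (hb : b ≠ 0) (hab : a * b ≤ μ (s ∩ t)) (hsb : μ s ≤ b) : a ≤ μ[|s] t := by
  rw [cond_apply hs]
  rcases eq_or_ne (μ s) 0 with h0 | h0
  · have : a * b = 0 := le_antisymm (hab.trans (measure_mono_null inter_subset_left h0).le) bot_le
    simp [(mul_eq_zero.1 this).resolve_right hb]
  · rw [← ENNReal.div_eq_inv_mul, ENNReal.le_div_iff_mul_le (.inl h0) (.inl (measure_ne_top _ _))]
    exact (mul_le_mul_right hsb a).trans hab

end ProbabilityTheory

lemma eq_of_forall_ne_lt {α β : Type*} [Preorder β] {f : α → β} {a b : α}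
    (ha : ∀ i ≠ a, f a < f i) (hb : ∀ i ≠ b, f b < f i) : a = b := by
  by_contra h
  exact lt_asymm (ha b (Ne.symm h)) (hb a h)

section GumbelListSampling

variable {α κ : Type*} {p q : α → ℝ} {j : α} {k₀ : κ} {s : α → κ → ℝ}

lemma iInf_div_lt_of_forall_ne_div_lt [Finite κ] (hq : ∀ i, 0 < q i)
    (h : ∀ m ≠ (j, k₀), s j k₀ / q j < s m.1 m.2 / q m.1) :
    ∀ i ≠ j, (⨅ k, s j k) / q j < (⨅ k, s i k) / q i := by
  have : Nonempty κ := ⟨k₀⟩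
  intro i hi
  obtain ⟨k₁, hk₁⟩ := exists_eq_ciInf_of_finite (f := s i)
  calc (⨅ k, s j k) / q j ≤ s j k₀ / q j :=
        div_le_div_of_nonneg_right (ciInf_le (Finite.bddBelow_range _) k₀) (hq j).le
    _ < s i k₁ / q i := h (i, k₁) (by simp [hi])
    _ = (⨅ k, s i k) / q i := by rw [hk₁]

lemma exists_forall_div_le_of_iInf_div_lt [Finite κ] [Nonempty κ] (hq : ∀ i, 0 < q i)
    (h : ∀ i ≠ j, (⨅ k, s j k) / q j < (⨅ k, s i k) / q i) :
    ∃ k₀, ∀ m : α × κ, s j k₀ / q j ≤ s m.1 m.2 / q m.1 := by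
  obtain ⟨k₀, hk₀⟩ := exists_eq_ciInf_of_finite (f := s j)
  refine ⟨k₀, fun ⟨i, k⟩ => ?_⟩
  have hle : (⨅ k, s i k) / q i ≤ s i k / q i :=
    div_le_div_of_nonneg_right (ciInf_le (Finite.bddBelow_range _) k) (hq i).le
  rw [hk₀]
  rcases eq_or_ne i j with rfl | hi
  · exact hle
  · exact (h i hi).le.trans hle

variable [DecidableEq κ]

/-- Rates of the race whose win by `(j, k₀)` forces both `Y = j` and `X k₀ = j`: the column
`k₀` competes against `q` and against `p` rescaled to agree with `q` at `j`. -/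
noncomputable def matchingRate (p q : α → ℝ) (j : α) (k₀ : κ) (m : α × κ) : ℝ :=
  if m.2 = k₀ then max (q m.1) (q j / p j * p m.1) else q m.1

lemma matchingRate_of_ne {m : α × κ} (h : m.2 ≠ k₀) : matchingRate p q j k₀ m = q m.1 :=
  if_neg h

lemma matchingRate_self (hp : p j ≠ 0) : matchingRate p q j k₀ (j, k₀) = q j := by
  simp [matchingRate, div_mul_cancel₀ _ hp]

lemma le_matchingRate (m : α × κ) : q m.1 ≤ matchingRate p q j k₀ m := by
  unfold matchingRate; split_ifs <;> simp

lemma matchingRate_pos (hq : ∀ i, 0 < q i) (m : α × κ) : 0 < matchingRate p q j k₀ m :=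
  (hq m.1).trans_le (le_matchingRate m)

lemma sum_matchingRate_le [Fintype α] [Fintype κ] (hp : ∀ i, 0 < p i) (hq : ∀ i, 0 < q i)
    (hpsum : ∑ i, p i = 1) (hqsum : ∑ i, q i = 1) :
    ∑ m, matchingRate p q j k₀ m ≤ Fintype.card κ + q j / p j := by
  have hle : ∀ m : α × κ,
      matchingRate p q j k₀ m ≤ q m.1 + if m.2 = k₀ then q j / p j * p m.1 else 0 := by
    intro m
    unfold matchingRate
    split_ifs
    · exact max_le_add_of_nonneg (hq _).le (mul_nonneg (div_nonneg (hq j).le (hp j).le) (hp _).le)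
    · simp
  refine (Finset.sum_le_sum fun m _ => hle m).trans_eq ?_
  simp [Finset.sum_add_distrib, Fintype.sum_prod_type, ← Finset.mul_sum, hpsum, hqsum]

lemma forall_ne_div_lt_of_lt_div_matchingRate (hs : ∀ i k, 0 ≤ s i k) (hq : ∀ i, 0 < q i)
    (h : ∀ m ≠ (j, k₀), s j k₀ / q j < s m.1 m.2 / matchingRate p q j k₀ m) :
    ∀ m ≠ (j, k₀), s j k₀ / q j < s m.1 m.2 / q m.1 :=
  fun m hm => (h m hm).trans_le (div_le_div_of_nonneg_left (hs _ _) (hq _) (le_matchingRate m))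

lemma div_lt_div_of_lt_div_matchingRate (hs : ∀ i k, 0 ≤ s i k) (hp : ∀ i, 0 < p i)
    (hq : ∀ i, 0 < q i)
    (h : ∀ m ≠ (j, k₀), s j k₀ / q j < s m.1 m.2 / matchingRate p q j k₀ m) :
    ∀ i ≠ j, s j k₀ / p j < s i k₀ / p i := by
  intro i hi
  have h' : s j k₀ / q j < s i k₀ / (q j / p j * p i) :=
    (h (i, k₀) (by simp [hi])).trans_le <| div_le_div_of_nonneg_left (hs _ _)
      (mul_pos (div_pos (hq j) (hp j)) (hp i)) (by simp [matchingRate])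
  rwa [show s j k₀ / q j = s j k₀ / p j * (p j / q j) by field_simp [(hp j).ne'],
    show s i k₀ / (q j / p j * p i) = s i k₀ / p i * (p j / q j) by
      field_simp [(hp j).ne', (hp i).ne', (hq j).ne'],
    mul_lt_mul_iff_of_pos_right (div_pos (hp j) (hq j))] at h'

variable {Ω : Type*} [MeasurableSpace Ω] {μ : Measure Ω} {S : α → κ → Ω → ℝ} {Y : Ω → α}
  {X : κ → Ω → α}

lemma ofReal_le_measure_eq_inter_exists_eq [Fintype α] [DecidableEq α] [Fintype κ]
    (hp : ∀ i, 0 < p i) (hq : ∀ i, 0 < q i) (hpsum : ∑ i, p i = 1) (hqsum : ∑ i, q i = 1)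
    (hSmeas : ∀ i k, Measurable (S i k))
    (hSindep : iIndepFun (fun ik : α × κ => S ik.1 ik.2) μ)
    (hSexp : ∀ i k, μ.map (S i k) = expMeasure 1)
    (hY : ∀ᵐ ω ∂μ, ∀ i, i ≠ Y ω → (⨅ k, S (Y ω) k ω) / q (Y ω) < (⨅ k, S i k ω) / q i)
    (hX : ∀ᵐ ω ∂μ, ∀ k i, i ≠ X k ω → S (X k ω) k ω / p (X k ω) < S i k ω / p i) (j : α) :
    ENNReal.ofReal (Fintype.card κ * (q j / (Fintype.card κ + q j / p j)))
      ≤ μ ({ω | Y ω = j} ∩ {ω | ∃ k, X k ω = Y ω}) := by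
  set E : κ → Set Ω := fun k₀ =>
    {ω | ∀ m ≠ (j, k₀), S j k₀ ω / q j < S m.1 m.2 ω / matchingRate p q j k₀ m}
  have hE : ∀ k₀, ENNReal.ofReal (q j / (Fintype.card κ + q j / p j)) ≤ μ (E k₀) := by
    intro k₀
    have h := measure_forall_ne_div_lt (fun m => hSmeas m.1 m.2) hSindep (fun m => hSexp m.1 m.2)
      (w := matchingRate p q j k₀) (matchingRate_pos hq) (j, k₀)
    rw [matchingRate_self (hp j).ne'] at h
    rw [h]
    exact ENNReal.ofReal_le_ofReal <| div_le_div_of_nonneg_left (hq j).le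
      (Finset.sum_pos (fun m _ => matchingRate_pos hq m) ⟨(j, k₀), Finset.mem_univ _⟩)
      (sum_matchingRate_le hp hq hpsum hqsum)
  have hEmeas : ∀ k₀, MeasurableSet (E k₀) := fun k₀ =>
    measurableSet_setOfPred.2 <| Measurable.forall fun m => measurable_const.imp <|
      measurableSet_setOfPred.1 <| measurableSet_lt (by fun_prop) (by fun_prop)
  have hdisj : Pairwise (Function.onFun Disjoint E) := by
    refine fun k₀ k₁ hk => Set.disjoint_left.2 fun ω h₀ h₁ => ?_
    have h₀₁ := h₀ (j, k₁) (by simp [hk.symm])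
    have h₁₀ := h₁ (j, k₀) (by simp [hk])
    rw [matchingRate_of_ne hk.symm] at h₀₁
    rw [matchingRate_of_ne hk] at h₁₀
    exact lt_asymm h₀₁ h₁₀
  have hnonneg : ∀ᵐ ω ∂μ, ∀ i k, 0 ≤ S i k ω := ae_all_iff.2 fun i => ae_all_iff.2 fun k =>
    ae_nonneg_of_map_eq_expMeasure (hSmeas i k) one_pos (hSexp i k)
  have hsub : ∀ᵐ ω ∂μ, ω ∈ ⋃ k₀, E k₀ → ω ∈ {ω | Y ω = j} ∩ {ω | ∃ k, X k ω = Y ω} := by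
    filter_upwards [hY, hX, hnonneg] with ω hYω hXω hs hω
    obtain ⟨k₀, hk₀⟩ := mem_iUnion.1 hω
    have hYj : Y ω = j := eq_of_forall_ne_lt (f := fun i => (⨅ k, S i k ω) / q i) hYω <|
      iInf_div_lt_of_forall_ne_div_lt hq (forall_ne_div_lt_of_lt_div_matchingRate hs hq hk₀)
    have hXj : X k₀ ω = j := eq_of_forall_ne_lt (f := fun i => S i k₀ ω / p i) (hXω k₀)
      (div_lt_div_of_lt_div_matchingRate hs hp hq hk₀)
    exact ⟨hYj, k₀, hXj.trans hYj.symm⟩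
  calc ENNReal.ofReal (Fintype.card κ * (q j / (Fintype.card κ + q j / p j)))
      = ∑ k₀ : κ, ENNReal.ofReal (q j / (Fintype.card κ + q j / p j)) := by
        rw [ENNReal.ofReal_mul (Nat.cast_nonneg _)]
        simp
    _ ≤ ∑ k₀, μ (E k₀) := Finset.sum_le_sum fun k₀ _ => hE k₀
    _ = μ (⋃ k₀, E k₀) := by rw [measure_iUnion hdisj hEmeas, tsum_fintype]
    _ ≤ _ := measure_mono_ae hsub

lemma measure_eq_le_ofReal [Fintype α] [DecidableEq α] [Fintype κ] [Nonempty κ]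
    (hq : ∀ i, 0 < q i) (hqsum : ∑ i, q i = 1) (hSmeas : ∀ i k, Measurable (S i k))
    (hSindep : iIndepFun (fun ik : α × κ => S ik.1 ik.2) μ)
    (hSexp : ∀ i k, μ.map (S i k) = expMeasure 1)
    (hY : ∀ᵐ ω ∂μ, ∀ i, i ≠ Y ω → (⨅ k, S (Y ω) k ω) / q (Y ω) < (⨅ k, S i k ω) / q i)
    (j : α) : μ {ω | Y ω = j} ≤ ENNReal.ofReal (q j) := by
  set F : κ → Set Ω := fun k₀ => {ω | ∀ m ≠ (j, k₀), S j k₀ ω / q j ≤ S m.1 m.2 ω / q m.1}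
  have hF : ∀ k₀, μ (F k₀) = ENNReal.ofReal (q j / Fintype.card κ) := by
    intro k₀
    have hsum : ∑ m : α × κ, q m.1 = Fintype.card κ := by
      simp [Fintype.sum_prod_type, ← Finset.mul_sum, hqsum]
    rw [← hsum]
    exact measure_forall_ne_div_le (fun m => hSmeas m.1 m.2) hSindep (fun m => hSexp m.1 m.2)
      (fun m => hq m.1) (j, k₀)
  have hsub : ∀ᵐ ω ∂μ, ω ∈ {ω | Y ω = j} → ω ∈ ⋃ k₀, F k₀ := by
    filter_upwards [hY] with ω hYω (hω : Y ω = j)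
    rw [hω] at hYω
    obtain ⟨k₀, hk₀⟩ := exists_forall_div_le_of_iInf_div_lt (s := fun i k => S i k ω) hq hYω
    exact mem_iUnion.2 ⟨k₀, fun m _ => hk₀ m⟩
  calc μ {ω | Y ω = j} ≤ μ (⋃ k₀, F k₀) := measure_mono_ae hsub
    _ ≤ ∑ k₀, μ (F k₀) := measure_iUnion_fintype_le μ F
    _ = ENNReal.ofReal (q j) := by
        simp only [hF, Finset.sum_const, Finset.card_univ, nsmul_eq_mul]
        rw [← ENNReal.ofReal_natCast, ← ENNReal.ofReal_mul (Nat.cast_nonneg _),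
          mul_div_cancel₀ _ (Nat.cast_ne_zero.2 Fintype.card_ne_zero)]

end GumbelListSampling

theorem list_matching_lemma_conditional_general
    {Ω : Type*} [MeasurableSpace Ω] (μ : Measure Ω) [IsProbabilityMeasure μ]
    (N K : ℕ) (hK : 0 < K)
    (p q : Fin N → ℝ) (hp : ∀ i, 0 < p i) (hq : ∀ i, 0 < q i)
    (hpsum : ∑ i, p i = 1) (hqsum : ∑ i, q i = 1)
    (S : Fin N → Fin K → Ω → ℝ) (hSmeas : ∀ i k, Measurable (S i k))
    (hSindep : iIndepFun
      (fun ik : Fin N × Fin K => S ik.1 ik.2) μ)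
    (hSexp : ∀ i k, μ.map (S i k) = expMeasure 1)
    (Y : Ω → Fin N) (hYmeas : Measurable Y)
    (X : Fin K → Ω → Fin N)
    -- `Y` is a.s. the unique argmin of `i ↦ (min_k S i k) / q i`
    (hY : ∀ᵐ ω ∂μ, ∀ i : Fin N, i ≠ Y ω →
      (⨅ k : Fin K, S (Y ω) k ω) / q (Y ω) < (⨅ k : Fin K, S i k ω) / q i)
    -- each `X k` is a.s. the unique argmin of `i ↦ S i k / p i`
    (hX : ∀ᵐ ω ∂μ, ∀ k : Fin K, ∀ i : Fin N, i ≠ X k ω →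
      S (X k ω) k ω / p (X k ω) < S i k ω / p i)
    : ∀ j : Fin N,
      ENNReal.ofReal ((1 + q j / ((K : ℝ) * p j))⁻¹)
        ≤ μ[|{ω | Y ω = j}] {ω | ∃ k : Fin K, X k ω = Y ω} := by
  intro j
  have : Nonempty (Fin K) := ⟨⟨0, hK⟩⟩
  have hYj : MeasurableSet {ω | Y ω = j} := hYmeas (measurableSet_singleton j)
  refine le_cond_apply_of_mul_le hYj (ENNReal.ofReal_pos.2 (hq j)).ne' ?_
    (measure_eq_le_ofReal hq hqsum hSmeas hSindep hSexp hY j)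
  rw [← ENNReal.ofReal_mul' (hq j).le]
  convert ofReal_le_measure_eq_inter_exists_eq hp hq hpsum hqsum hSmeas hSindep hSexp hY hX j
    using 2
  rw [Fintype.card_fin]
  field_simp [(hp j).ne']

/-- **List matching lemma, conditional form (Theorem 1, eq. (4)).**
Under Gumbel-max list sampling, for every `j`,
`Pr[Y ∈ {X 1, …, X K} | Y = j] ≥ (1 + q j / (K * p j))⁻¹`. -/
theorem list_matching_lemma_conditional
    {Ω : Type*} [MeasurableSpace Ω] (μ : Measure Ω) [IsProbabilityMeasure μ]
    (N K : ℕ) (hN : 0 < N) (hK : 0 < K)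
    (p q : Fin N → ℝ) (hp : ∀ i, 0 < p i) (hq : ∀ i, 0 < q i)
    (hpsum : ∑ i, p i = 1) (hqsum : ∑ i, q i = 1)
    (S : Fin N → Fin K → Ω → ℝ) (hSmeas : ∀ i k, Measurable (S i k))
    (hSindep : iIndepFun
      (fun ik : Fin N × Fin K => S ik.1 ik.2) μ)
    (hSexp : ∀ i k, μ.map (S i k) = expMeasure 1)
    (Y : Ω → Fin N) (hYmeas : Measurable Y)
    (X : Fin K → Ω → Fin N) (hXmeas : ∀ k, Measurable (X k))
    -- `Y` is a.s. the unique argmin of `i ↦ (min_k S i k) / q i`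
    (hY : ∀ᵐ ω ∂μ, ∀ i : Fin N, i ≠ Y ω →
      (⨅ k : Fin K, S (Y ω) k ω) / q (Y ω) < (⨅ k : Fin K, S i k ω) / q i)
    -- each `X k` is a.s. the unique argmin of `i ↦ S i k / p i`
    (hX : ∀ᵐ ω ∂μ, ∀ k : Fin K, ∀ i : Fin N, i ≠ X k ω →
      S (X k ω) k ω / p (X k ω) < S i k ω / p i)
    : ∀ j : Fin N,
      ENNReal.ofReal ((1 + q j / ((K : ℝ) * p j))⁻¹)
        ≤ μ[|{ω | Y ω = j}] {ω | ∃ k : Fin K, X k ω = Y ω} :=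
  list_matching_lemma_conditional_general μ N K hK p q hp hq hpsum hqsum S hSmeas hSindep hSexp Y
    hYmeas X hY hX
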